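/- arXiv:2011.10623 — 2 statements merged into one kernel-verified Lean document; each statement's English description precedes it below -/
import Mathlib

section
/- Let G = K(5, 2) be the Petersen graph and let D be any target distribution on G of size t ≥ 1. Then π(G, D) ≤ p(5, t), where p(5, t) = max( 10 + 2t − 2, 4t + 5 ); that is, every configuration on G of size p(5, t) is D-solvable. -/
/-- A single pebbling step: remove two pebbles from `u` and add one to an adjacent `v`. -/
def PebblingStep {V : Type} [DecidableEq V] (G : SimpleGraph V) (C C' : V → ℕ) : Prop :=
  ∃ u v : V, G.Adj u v ∧ 2 ≤ C u ∧
    C' = fun w => if w = u then C u - 2 else if w = v then C v + 1 else C w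

/-- `C` solves the target distribution `D`: some sequence of pebbling steps reaches a
configuration with at least `D v` pebbles on each vertex `v`. -/
def Solvable {V : Type} [DecidableEq V] (G : SimpleGraph V) (C D : V → ℕ) : Prop :=
  ∃ C' : V → ℕ, Relation.ReflTransGen (PebblingStep G) C C' ∧ ∀ v, D v ≤ C' v

/-- The distribution with `t` pebbles stacked on `r` and none elsewhere. -/
def stack {V : Type} [DecidableEq V] (r : V) (t : ℕ) : V → ℕ :=
  fun v => if v = r then t else 0

/-- The pebbling number of the demand `D` in `G`: the smallest `m` such that every
configuration of size `m` is `D`-solvable. -/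
noncomputable def pebblingNumber {V : Type} [Fintype V] [DecidableEq V] (G : SimpleGraph V) (D : V → ℕ) : ℕ :=
  sInf {m | ∀ C : V → ℕ, (∑ v, C v) = m → Solvable G C D}

/-- The `t`-fold pebbling number of `G`. -/
noncomputable def tPebblingNumber {V : Type} [Fintype V] [DecidableEq V]
    (G : SimpleGraph V) (t : ℕ) : ℕ :=
  Finset.univ.sup fun r => pebblingNumber G (stack r t)

/-- Reaching `C'` from `C` by exactly `k` pebbling steps. -/
inductive StepsN {V : Type} [DecidableEq V] (G : SimpleGraph V) : ℕ → (V → ℕ) → (V → ℕ) → Prop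
  | refl (C : V → ℕ) : StepsN G 0 C C
  | tail {k : ℕ} {C C' C'' : V → ℕ} :
      StepsN G k C C' → PebblingStep G C' C'' → StepsN G (k + 1) C C''

/-- `C` has an `r`-solution of cost at most `c` (cost = number of pebbling steps plus one). -/
def CheaplySolvable {V : Type} [DecidableEq V] (G : SimpleGraph V) (C : V → ℕ) (r : V) (c : ℕ) : Prop :=
  ∃ (k : ℕ) (C' : V → ℕ), StepsN G k C C' ∧ 1 ≤ C' r ∧ k + 1 ≤ c

/-- The eccentricity of a vertex: the maximum distance to any other vertex. -/
noncomputable def eccentricity {V : Type} [Fintype V] (G : SimpleGraph V) (r : V) : ℕ :=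
  Finset.univ.sup fun v => G.dist r v

/-- A vertex is simplicial if its neighborhood induces a complete graph. -/
def IsSimplicial {V : Type} (G : SimpleGraph V) (v : V) : Prop :=
  ∀ a b : V, G.Adj v a → G.Adj v b → a ≠ b → G.Adj a b

/-- A 2-path is either `K₂` or `K₃`, or a graph with exactly two simplicial vertices
`u` and `v` such that the neighborhood of `v` induces `K₂` and `G - v` is a 2-path. -/
inductive IsTwoPath : {V : Type} → SimpleGraph V → Prop
  | complete2 {V : Type} (G : SimpleGraph V) :
      Nat.card V = 2 → (∀ a b : V, a ≠ b → G.Adj a b) → IsTwoPath G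
  | complete3 {V : Type} (G : SimpleGraph V) :
      Nat.card V = 3 → (∀ a b : V, a ≠ b → G.Adj a b) → IsTwoPath G
  | extend {V : Type} (G : SimpleGraph V) (u v : V) :
      u ≠ v →
      {w : V | IsSimplicial G w} = {u, v} →
      (G.neighborSet v).ncard = 2 →
      IsSimplicial G v →
      IsTwoPath (G.induce {w : V | w ≠ v}) →
      IsTwoPath G

/-- The Kneser graph `K(m, h)`: vertices are the `h`-element subsets of `{1, …, m}`,
adjacent iff disjoint. -/
def kneserGraph (m h : ℕ) : SimpleGraph {s : Finset (Fin m) // s.card = h} :=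
  SimpleGraph.fromRel fun a b => Disjoint a.1 b.1


set_option linter.unusedSectionVars false

namespace PB
variable {V : Type} [DecidableEq V] {G : SimpleGraph V}

def applyMove (C : V → ℕ) (u v : V) : V → ℕ :=
  fun w => if w = u then C u - 2 else if w = v then C v + 1 else C w

abbrev Reach (G : SimpleGraph V) [DecidableEq V] (C C' : V → ℕ) : Prop :=
  Relation.ReflTransGen (PebblingStep G) C C'

def UnitSolvable (G : SimpleGraph V) [DecidableEq V] (C : V → ℕ) (r : V) : Prop :=
  ∃ C' : V → ℕ, Reach G C C' ∧ 1 ≤ C' r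

lemma mkStep {C : V → ℕ} {u v : V} (h : G.Adj u v) (h2 : 2 ≤ C u) :
    PebblingStep G C (applyMove C u v) := ⟨u, v, h, h2, rfl⟩

lemma reach_cons {C C' : V → ℕ} {u v : V} (h : G.Adj u v) (h2 : 2 ≤ C u)
    (hr : Reach G (applyMove C u v) C') : Reach G C C' :=
  Relation.ReflTransGen.head (mkStep h h2) hr

lemma am_src (C : V → ℕ) (u v : V) : applyMove C u v u = C u - 2 := by simp [applyMove]

lemma am_tgt {u v : V} (C : V → ℕ) (h : v ≠ u) : applyMove C u v v = C v + 1 := by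
  simp [applyMove, h]

lemma am_other {u v x : V} (C : V → ℕ) (h1 : x ≠ u) (h2 : x ≠ v) :
    applyMove C u v x = C x := by simp [applyMove, h1, h2]

lemma am_eq_update {C : V → ℕ} {u v : V} (h : u ≠ v) :
    applyMove C u v = Function.update (Function.update C u (C u - 2)) v (C v + 1) := by
  funext x
  by_cases hx : x = u
  · subst hx; simp [applyMove, h, Function.update, h.symm]
  · by_cases hx2 : x = v
    · subst hx2; simp [applyMove, hx, Function.update]
    · simp [applyMove, hx, hx2, Function.update]

variable [Fintype V]

lemma sum_update (C : V → ℕ) (u : V) (n : ℕ) :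
    ∑ w, Function.update C u n w = n + ∑ w ∈ Finset.univ.erase u, C w := by
  rw [← Finset.add_sum_erase _ _ (Finset.mem_univ u)]
  simp only [Function.update_self]
  congr 1
  apply Finset.sum_congr rfl
  intro x hx
  exact Function.update_of_ne (Finset.mem_erase.mp hx).1 _ _

lemma sum_am {C : V → ℕ} {u v : V} (h2 : 2 ≤ C u) (hne : u ≠ v) :
    (∑ w, applyMove C u v w) + 1 = ∑ w, C w := by
  rw [am_eq_update hne, sum_update]
  have h1 : ∑ w ∈ Finset.univ.erase v, Function.update C u (C u - 2) w
      = (C u - 2) + ∑ w ∈ (Finset.univ.erase v).erase u, C w := by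
    rw [← Finset.add_sum_erase _ _ (Finset.mem_erase.mpr ⟨hne, Finset.mem_univ u⟩)]
    simp only [Function.update_self]
    congr 1
    apply Finset.sum_congr rfl
    intro x hx
    exact Function.update_of_ne (Finset.mem_erase.mp hx).1 _ _
  rw [h1]
  have h3 : ∑ w, C w = C v + (C u + ∑ w ∈ (Finset.univ.erase v).erase u, C w) := by
    rw [← Finset.add_sum_erase _ C (Finset.mem_univ v),
      ← Finset.add_sum_erase _ C (Finset.mem_erase.mpr ⟨hne, Finset.mem_univ u⟩)]
  omega

lemma step_sum {C C' : V → ℕ} (h : PebblingStep G C C') : (∑ w, C' w) + 1 = ∑ w, C w := by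
  obtain ⟨u, v, hadj, h2, rfl⟩ := h
  exact sum_am h2 (G.ne_of_adj hadj)

lemma reach_sum_le {C C' : V → ℕ} (h : Reach G C C') : ∑ w, C' w ≤ ∑ w, C w := by
  induction h with
  | refl => exact le_refl _
  | tail _ hstep ih => have := step_sum hstep; omega

lemma step_add {C C' E : V → ℕ} (h : PebblingStep G C C') :
    PebblingStep G (fun v => C v + E v) (fun v => C' v + E v) := by
  obtain ⟨u, v, hadj, h2, rfl⟩ := h
  refine ⟨u, v, hadj, (show 2 ≤ C u + E u by omega), ?_⟩
  funext w
  show (if w = u then C u - 2 else if w = v then C v + 1 else C w) + E w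
      = if w = u then C u + E u - 2 else if w = v then C v + E v + 1 else C w + E w
  by_cases hw : w = u
  · subst hw; simp; omega
  · by_cases hw2 : w = v
    · subst hw2; simp [hw]; omega
    · simp [hw, hw2]

lemma reach_add {C C' : V → ℕ} (E : V → ℕ) (h : Reach G C C') :
    Reach G (fun v => C v + E v) (fun v => C' v + E v) := by
  induction h with
  | refl => exact Relation.ReflTransGen.refl
  | tail _ hstep ih => exact Relation.ReflTransGen.tail ih (step_add hstep)

end PB

namespace PB
variable {V : Type} [DecidableEq V] {G : SimpleGraph V} {r : V}

lemma us_step {C : V → ℕ} {u v : V} (h : G.Adj u v) (h2 : 2 ≤ C u)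
    (hs : UnitSolvable G (applyMove C u v) r) : UnitSolvable G C r :=
  let ⟨C', hr, hv⟩ := hs; ⟨C', reach_cons h h2 hr, hv⟩

lemma P1 {C : V → ℕ} (h : 1 ≤ C r) : UnitSolvable G C r := ⟨C, Relation.ReflTransGen.refl, h⟩

lemma Pfin {C : V → ℕ} {u : V} (h : G.Adj u r) (h2 : 2 ≤ C u) : UnitSolvable G C r :=
  ⟨applyMove C u r, Relation.ReflTransGen.single (mkStep h h2), by
    rw [am_tgt C (G.ne_of_adj h).symm]; omega⟩

lemma K2 {C : V → ℕ} {w u : V} (hwu : G.Adj w u) (hur : G.Adj u r)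
    (h2 : 2 ≤ C w) (h1 : 1 ≤ C u) : UnitSolvable G C r := by
  refine us_step hwu h2 (Pfin hur ?_)
  rw [am_tgt C (G.ne_of_adj hwu).symm]; omega

lemma K3 {C : V → ℕ} {w1 w2 u : V} (h1u : G.Adj w1 u) (h2u : G.Adj w2 u) (hur : G.Adj u r)
    (h12 : w1 ≠ w2) (ha : 2 ≤ C w1) (hb : 2 ≤ C w2) : UnitSolvable G C r := by
  refine us_step h1u ha (us_step h2u ?_ (Pfin hur ?_))
  · rw [am_other C h12.symm (G.ne_of_adj h2u)]; omega
  · rw [am_tgt _ (G.ne_of_adj h2u).symm, am_tgt C (G.ne_of_adj h1u).symm]; omega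

lemma K4p {C : V → ℕ} {w u : V} (hwu : G.Adj w u) (hur : G.Adj u r)
    (h4 : 4 ≤ C w) : UnitSolvable G C r := by
  refine us_step hwu (by omega) (us_step hwu ?_ (Pfin hur ?_))
  · rw [am_src]; omega
  · rw [am_tgt _ (G.ne_of_adj hwu).symm, am_tgt C (G.ne_of_adj hwu).symm]; omega

lemma K5 {C : V → ℕ} {a b u : V} (hab : G.Adj a b) (hbu : G.Adj b u) (hur : G.Adj u r)
    (hau : a ≠ u) (h2 : 2 ≤ C a) (h3 : 3 ≤ C b) : UnitSolvable G C r := by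
  have e1 : applyMove C a b b = C b + 1 := am_tgt C (G.ne_of_adj hab).symm
  refine us_step hab h2 (us_step hbu (by omega) (us_step hbu ?_ (Pfin hur ?_)))
  · rw [am_src]; omega
  · rw [am_tgt _ (G.ne_of_adj hbu).symm, am_tgt _ (G.ne_of_adj hbu).symm,
      am_other C hau.symm (G.ne_of_adj hbu).symm]
    omega

lemma K6 {C : V → ℕ} {a b u : V} (hab : G.Adj a b) (hbu : G.Adj b u) (hur : G.Adj u r)
    (hau : a ≠ u) (h2 : 2 ≤ C a) (hb1 : 1 ≤ C b) (hu1 : 1 ≤ C u) : UnitSolvable G C r := by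
  have e1 : applyMove C a b b = C b + 1 := am_tgt C (G.ne_of_adj hab).symm
  refine us_step hab h2 (us_step hbu (by omega) (Pfin hur ?_))
  rw [am_tgt _ (G.ne_of_adj hbu).symm, am_other C hau.symm (G.ne_of_adj hbu).symm]; omega

lemma K7 {C : V → ℕ} {a b p u : V} (hab : G.Adj a b) (hbu : G.Adj b u) (hpu : G.Adj p u)
    (hur : G.Adj u r) (hau : a ≠ u) (hpa : p ≠ a) (hpb : p ≠ b)
    (h2 : 2 ≤ C a) (hb1 : 1 ≤ C b) (hp : 2 ≤ C p) : UnitSolvable G C r := by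
  have e1 : applyMove C a b b = C b + 1 := am_tgt C (G.ne_of_adj hab).symm
  refine us_step hab h2 (us_step hbu (by omega) (us_step hpu ?_ (Pfin hur ?_)))
  · rw [am_other _ hpb (G.ne_of_adj hpu), am_other C hpa hpb]; omega
  · rw [am_tgt _ (G.ne_of_adj hpu).symm, am_tgt _ (G.ne_of_adj hbu).symm,
      am_other C hau.symm (G.ne_of_adj hbu).symm]
    omega

lemma K8 {C : V → ℕ} {a b c u : V} (hab : G.Adj a b) (hbc : G.Adj b c) (hcu : G.Adj c u)
    (hur : G.Adj u r) (hca : c ≠ a) (hua : u ≠ a) (hub : u ≠ b)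
    (h2 : 2 ≤ C a) (hb1 : 1 ≤ C b) (hc3 : 3 ≤ C c) : UnitSolvable G C r := by
  have e1 : applyMove C a b b = C b + 1 := am_tgt C (G.ne_of_adj hab).symm
  have e2 : applyMove (applyMove C a b) b c c = applyMove C a b c + 1 :=
    am_tgt _ (G.ne_of_adj hbc).symm
  have e3 : applyMove C a b c = C c := am_other C hca (G.ne_of_adj hbc).symm
  refine us_step hab h2 (us_step hbc (by omega) (us_step hcu (by omega)
    (us_step hcu ?_ (Pfin hur ?_))))
  · rw [am_src]; omega
  · rw [am_tgt _ (G.ne_of_adj hcu).symm, am_tgt _ (G.ne_of_adj hcu).symm,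
      am_other _ hub (G.ne_of_adj hcu).symm, am_other C hua hub]
    omega

lemma K9 {C : V → ℕ} {a b c u : V} (hab : G.Adj a b) (hcb : G.Adj c b) (hbu : G.Adj b u)
    (hur : G.Adj u r) (hac : a ≠ c) (hua : u ≠ a) (huc : u ≠ c)
    (h2a : 2 ≤ C a) (h2b : 2 ≤ C b) (h2c : 2 ≤ C c) : UnitSolvable G C r := by
  have e0 : applyMove C a b c = C c := am_other C hac.symm (G.ne_of_adj hcb)
  have e1 : applyMove (applyMove C a b) c b b = applyMove C a b b + 1 :=
    am_tgt _ (G.ne_of_adj hcb).symm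
  have e2 : applyMove C a b b = C b + 1 := am_tgt C (G.ne_of_adj hab).symm
  refine us_step hab h2a (us_step hcb (by omega) (us_step hbu (by omega)
    (us_step hbu ?_ (Pfin hur ?_))))
  · rw [am_src]; omega
  · rw [am_tgt _ (G.ne_of_adj hbu).symm, am_tgt _ (G.ne_of_adj hbu).symm,
      am_other _ huc (G.ne_of_adj hbu).symm, am_other C hua (G.ne_of_adj hbu).symm]
    omega

lemma K10 {C : V → ℕ} {a b c u : V} (hab : G.Adj a b) (hcb : G.Adj c b) (hbu : G.Adj b u)
    (hur : G.Adj u r) (hac : a ≠ c) (hua : u ≠ a) (huc : u ≠ c)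
    (h2a : 2 ≤ C a) (h2c : 2 ≤ C c) (hu1 : 1 ≤ C u) : UnitSolvable G C r := by
  have e0 : applyMove C a b c = C c := am_other C hac.symm (G.ne_of_adj hcb)
  have e1 : applyMove (applyMove C a b) c b b = applyMove C a b b + 1 :=
    am_tgt _ (G.ne_of_adj hcb).symm
  have e2 : applyMove C a b b = C b + 1 := am_tgt C (G.ne_of_adj hab).symm
  refine us_step hab h2a (us_step hcb (by omega) (us_step hbu (by omega) (Pfin hur ?_)))
  rw [am_tgt _ (G.ne_of_adj hbu).symm, am_other _ huc (G.ne_of_adj hbu).symm,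
    am_other C hua (G.ne_of_adj hbu).symm]
  omega

lemma K11 {C : V → ℕ} {a b m p u : V} (ham : G.Adj a m) (hbm : G.Adj b m) (hmu : G.Adj m u)
    (hpu : G.Adj p u) (hur : G.Adj u r) (hab : a ≠ b) (hpa : p ≠ a) (hpb : p ≠ b) (hpm : p ≠ m)
    (hua : u ≠ a) (hub : u ≠ b)
    (h2a : 2 ≤ C a) (h2b : 2 ≤ C b) (h2p : 2 ≤ C p) : UnitSolvable G C r := by
  have e0 : applyMove C a m b = C b := am_other C hab.symm (G.ne_of_adj hbm)
  have e1 : applyMove (applyMove C a m) b m m = applyMove C a m m + 1 :=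
    am_tgt _ (G.ne_of_adj hbm).symm
  have e2 : applyMove C a m m = C m + 1 := am_tgt C (G.ne_of_adj ham).symm
  refine us_step ham h2a (us_step hbm (by omega) (us_step hmu (by omega)
    (us_step hpu ?_ (Pfin hur ?_))))
  · rw [am_other _ hpm (G.ne_of_adj hpu), am_other _ hpb hpm, am_other C hpa hpm]; omega
  · rw [am_tgt _ (G.ne_of_adj hpu).symm, am_tgt _ (G.ne_of_adj hmu).symm,
      am_other _ hub (G.ne_of_adj hmu).symm, am_other C hua (G.ne_of_adj hmu).symm]
    omega

end PB

namespace PB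
abbrev V5 := {s : Finset (Fin 5) // s.card = 2}
abbrev G5 := kneserGraph 5 2

instance : DecidableRel G5.Adj :=
  fun a b => inferInstanceAs (Decidable (a ≠ b ∧ (Disjoint a.1 b.1 ∨ Disjoint b.1 a.1)))

def v01 : V5 := ⟨{0,1}, by decide⟩
def c1 : V5 := ⟨{0,2}, by decide⟩
def c2 : V5 := ⟨{1,3}, by decide⟩
def c3 : V5 := ⟨{0,4}, by decide⟩
def c4 : V5 := ⟨{1,2}, by decide⟩
def c5 : V5 := ⟨{0,3}, by decide⟩
def c6 : V5 := ⟨{1,4}, by decide⟩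
def a1 : V5 := ⟨{3,4}, by decide⟩
def a2 : V5 := ⟨{2,4}, by decide⟩
def a3 : V5 := ⟨{2,3}, by decide⟩

lemma mkAdj {a b : V5} (h : a ≠ b ∧ (Disjoint a.1 b.1 ∨ Disjoint b.1 a.1)) : G5.Adj a b := h

lemma sumV5 (C : V5 → ℕ) : ∑ v, C v =
    C v01 + C c1 + C c2 + C c3 + C c4 + C c5 + C c6 + C a1 + C a2 + C a3 := by
  rw [show (Finset.univ : Finset V5) = {v01, c1, c2, c3, c4, c5, c6, a1, a2, a3} from by decide]
  rw [Finset.sum_insert (by decide), Finset.sum_insert (by decide),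
    Finset.sum_insert (by decide), Finset.sum_insert (by decide),
    Finset.sum_insert (by decide), Finset.sum_insert (by decide),
    Finset.sum_insert (by decide), Finset.sum_insert (by decide),
    Finset.sum_insert (by decide), Finset.sum_singleton]
  omega

def vmap (σ : Equiv.Perm (Fin 5)) : V5 → V5 :=
  fun s => ⟨s.1.image σ, by rw [Finset.card_image_of_injective _ σ.injective, s.2]⟩

def vperm (σ : Equiv.Perm (Fin 5)) : V5 ≃ V5 where
  toFun := vmap σ
  invFun := vmap σ⁻¹
  left_inv := fun s => Subtype.ext (by
    simp only [vmap]
    rw [Finset.image_image]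
    have h : ⇑(σ⁻¹) ∘ ⇑σ = id := by funext x; simp
    rw [h, Finset.image_id])
  right_inv := fun s => Subtype.ext (by
    simp only [vmap]
    rw [Finset.image_image]
    have h : ⇑σ ∘ ⇑(σ⁻¹) = id := by funext x; simp
    rw [h, Finset.image_id])

lemma vperm_adj (σ : Equiv.Perm (Fin 5)) (a b : V5) :
    G5.Adj (vperm σ a) (vperm σ b) ↔ G5.Adj a b := by
  show ((vperm σ a ≠ vperm σ b) ∧ _) ↔ (a ≠ b ∧ _)
  apply and_congr
  · exact (vperm σ).injective.ne_iff
  · apply or_congr <;>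
    · show Disjoint (Finset.image _ _) (Finset.image _ _) ↔ _
      exact Finset.disjoint_image σ.injective

set_option maxRecDepth 40000 in
lemma exists_to : ∀ r : V5, ∃ σ : Equiv.Perm (Fin 5), vmap σ v01 = r := by decide

lemma exists_fix (v : V5) (h1 : v ≠ v01) (h2 : ¬ G5.Adj v01 v) :
    ∃ σ : Equiv.Perm (Fin 5), vmap σ v01 = v01 ∧ vmap σ c1 = v := by
  revert h1 h2; revert v
  set_option maxRecDepth 40000 in decide

end PB

namespace PB
section
variable {V : Type} [DecidableEq V] {G : SimpleGraph V}

lemma step_comp {C C' : V → ℕ} (e : V ≃ V) (he : ∀ a b, G.Adj (e a) (e b) ↔ G.Adj a b)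
    (h : PebblingStep G C C') : PebblingStep G (C ∘ e) (C' ∘ e) := by
  obtain ⟨u, v, ha, h2, rfl⟩ := h
  refine ⟨e.symm u, e.symm v, ?_, ?_, ?_⟩
  · have h' := he (e.symm u) (e.symm v)
    rw [e.apply_symm_apply, e.apply_symm_apply] at h'
    exact h'.mp ha
  · show 2 ≤ C (e (e.symm u)); rw [e.apply_symm_apply]; exact h2
  · funext w
    show (if e w = u then C u - 2 else if e w = v then C v + 1 else C (e w)) = _
    by_cases hw : w = e.symm u
    · rw [if_pos (show e w = u by rw [hw, e.apply_symm_apply]), if_pos hw]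
      show _ = C (e (e.symm u)) - 2
      rw [e.apply_symm_apply]
    · have hw' : ¬ e w = u := fun h' => hw (by rw [← h', e.symm_apply_apply])
      rw [if_neg hw', if_neg hw]
      by_cases hw2 : w = e.symm v
      · rw [if_pos (show e w = v by rw [hw2, e.apply_symm_apply]), if_pos hw2]
        show _ = C (e (e.symm v)) + 1
        rw [e.apply_symm_apply]
      · have hw2' : ¬ e w = v := fun h' => hw2 (by rw [← h', e.symm_apply_apply])
        rw [if_neg hw2', if_neg hw2]
        rfl

lemma reach_comp {C C' : V → ℕ} (e : V ≃ V) (he : ∀ a b, G.Adj (e a) (e b) ↔ G.Adj a b)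
    (h : Reach G C C') : Reach G (C ∘ e) (C' ∘ e) := by
  induction h with
  | refl => exact Relation.ReflTransGen.refl
  | tail _ hstep ih => exact Relation.ReflTransGen.tail ih (step_comp e he hstep)

lemma us_comp {C : V → ℕ} {r : V} (e : V ≃ V) (he : ∀ a b, G.Adj (e a) (e b) ↔ G.Adj a b)
    (h : UnitSolvable G C r) : UnitSolvable G (C ∘ e) (e.symm r) := by
  obtain ⟨C', hr, hv⟩ := h
  exact ⟨C' ∘ e, reach_comp e he hr, by show 1 ≤ C' (e (e.symm r)); rw [e.apply_symm_apply]; exact hv⟩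

lemma he_symm {e : V ≃ V} (he : ∀ a b, G.Adj (e a) (e b) ↔ G.Adj a b) :
    ∀ a b, G.Adj (e.symm a) (e.symm b) ↔ G.Adj a b := by
  intro a b
  have h' := he (e.symm a) (e.symm b)
  rw [e.apply_symm_apply, e.apply_symm_apply] at h'
  exact h'.symm

variable [Fintype V]

lemma sum_comp (e : V ≃ V) (C : V → ℕ) : ∑ w, (C ∘ e) w = ∑ w, C w :=
  Equiv.sum_comp e C

lemma pigeon8 {C : V → ℕ} {r w : V} (hall : ∀ v, C v ≤ 1) (hr : C r = 0) (hw : C w = 0)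
    (hrw : w ≠ r) : ∑ v, C v ≤ Fintype.card V - 2 := by
  rw [← Finset.add_sum_erase _ C (Finset.mem_univ r), hr,
    ← Finset.add_sum_erase _ C (Finset.mem_erase.mpr ⟨hrw, Finset.mem_univ w⟩), hw]
  have h1 : ∑ x ∈ (Finset.univ.erase r).erase w, C x ≤ ((Finset.univ.erase r).erase w).card := by
    simpa using Finset.sum_le_card_nsmul ((Finset.univ.erase r).erase w) C 1 (fun x _ => hall x)
  have hcard : ((Finset.univ.erase r).erase w).card = Fintype.card V - 2 := by
    rw [Finset.card_erase_of_mem (Finset.mem_erase.mpr ⟨hrw, Finset.mem_univ w⟩),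
      Finset.card_erase_of_mem (Finset.mem_univ r), Finset.card_univ]
    omega
  omega

lemma pigeon9 {C : V → ℕ} {r : V} (hall : ∀ v, C v ≤ 1) (hr : C r = 0) :
    ∑ v, C v ≤ Fintype.card V - 1 := by
  rw [← Finset.add_sum_erase _ C (Finset.mem_univ r), hr]
  have h1 : ∑ x ∈ Finset.univ.erase r, C x ≤ (Finset.univ.erase r).card := by
    simpa using Finset.sum_le_card_nsmul (Finset.univ.erase r) C 1 (fun x _ => hall x)
  have hcard : (Finset.univ.erase r).card = Fintype.card V - 1 := by
    rw [Finset.card_erase_of_mem (Finset.mem_univ r), Finset.card_univ]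
  omega

end
end PB
namespace PB
section
variable {V : Type} [DecidableEq V] [Fintype V]

lemma pigeon10 {C : V → ℕ} {z : V} (hall : ∀ w, w ≠ z → C w ≤ 1) (hz : C z ≤ 1) :
    ∑ v, C v ≤ Fintype.card V := by
  rw [← Finset.add_sum_erase _ C (Finset.mem_univ z)]
  have h1 : ∑ x ∈ Finset.univ.erase z, C x ≤ (Finset.univ.erase z).card := by
    simpa using Finset.sum_le_card_nsmul (Finset.univ.erase z) C 1
      (fun x hx => hall x (Finset.mem_erase.mp hx).1)
  have hcard : (Finset.univ.erase z).card = Fintype.card V - 1 := by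
    rw [Finset.card_erase_of_mem (Finset.mem_univ z), Finset.card_univ]
  have hpos : 1 ≤ Fintype.card V := Fintype.card_pos_iff.mpr ⟨z⟩
  omega

lemma pigeon_aux {C : V → ℕ} {z u : V} (hall : ∀ w, w ≠ z → C w ≤ 1) (hz : C z ≤ 1)
    (hu : C u = 0) (huz : u ≠ z) : ∑ v, C v ≤ Fintype.card V - 1 := by
  rw [← Finset.add_sum_erase _ C (Finset.mem_univ z),
    ← Finset.add_sum_erase _ C (Finset.mem_erase.mpr ⟨huz, Finset.mem_univ u⟩), hu]
  have h1 : ∑ x ∈ (Finset.univ.erase z).erase u, C x ≤ ((Finset.univ.erase z).erase u).card := by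
    simpa using Finset.sum_le_card_nsmul ((Finset.univ.erase z).erase u) C 1
      (fun x hx => hall x (Finset.mem_erase.mp (Finset.mem_erase.mp hx).2).1)
  have hcard : ((Finset.univ.erase z).erase u).card = Fintype.card V - 2 := by
    rw [Finset.card_erase_of_mem (Finset.mem_erase.mpr ⟨huz, Finset.mem_univ u⟩),
      Finset.card_erase_of_mem (Finset.mem_univ z), Finset.card_univ]
    omega
  have hpos : 1 < Fintype.card V := Fintype.one_lt_card_iff.mpr ⟨u, z, huz⟩
  omega

end
end PB

namespace PB

set_option maxHeartbeats 1000000 in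
lemma core9_c1 (C : V5 → ℕ) (hs : 9 ≤ ∑ v, C v) (h0 : C v01 = 0) (hx1 : 2 ≤ C c1) :
    UnitSolvable G5 C v01 := by
  rw [sumV5] at hs
  by_cases hy1 : 2 ≤ C a1
  · exact Pfin (by decide : G5.Adj a1 v01) hy1
  by_cases hy2 : 2 ≤ C a2
  · exact Pfin (by decide : G5.Adj a2 v01) hy2
  by_cases hy3 : 2 ≤ C a3
  · exact Pfin (by decide : G5.Adj a3 v01) hy3
  by_cases hb1 : 4 ≤ C c1
  · exact K4p (by decide : G5.Adj c1 a1) (by decide : G5.Adj a1 v01) hb1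
  by_cases hb2 : 4 ≤ C c2
  · exact K4p (by decide : G5.Adj c2 a2) (by decide : G5.Adj a2 v01) hb2
  by_cases hb3 : 4 ≤ C c3
  · exact K4p (by decide : G5.Adj c3 a3) (by decide : G5.Adj a3 v01) hb3
  by_cases hb4 : 4 ≤ C c4
  · exact K4p (by decide : G5.Adj c4 a1) (by decide : G5.Adj a1 v01) hb4
  by_cases hb5 : 4 ≤ C c5
  · exact K4p (by decide : G5.Adj c5 a2) (by decide : G5.Adj a2 v01) hb5
  by_cases hb6 : 4 ≤ C c6
  · exact K4p (by decide : G5.Adj c6 a3) (by decide : G5.Adj a3 v01) hb6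
  by_cases hy1' : 1 ≤ C a1
  · exact K2 (by decide : G5.Adj c1 a1) (by decide : G5.Adj a1 v01) hx1 hy1'
  by_cases hx4 : 2 ≤ C c4
  · exact K3 (by decide : G5.Adj c1 a1) (by decide : G5.Adj c4 a1) (by decide : G5.Adj a1 v01)
      (by decide) hx1 hx4
  by_cases hx2c : 3 ≤ C c2
  · exact K5 (by decide : G5.Adj c1 c2) (by decide : G5.Adj c2 a2) (by decide : G5.Adj a2 v01)
      (by decide) hx1 hx2c
  by_cases hx6c : 3 ≤ C c6
  · exact K5 (by decide : G5.Adj c1 c6) (by decide : G5.Adj c6 a3) (by decide : G5.Adj a3 v01)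
      (by decide) hx1 hx6c
  by_cases h2 : 1 ≤ C c2
  · by_cases h6 : 1 ≤ C c6
    · -- Case A
      by_cases ha2 : 1 ≤ C a2
      · exact K6 (by decide : G5.Adj c1 c2) (by decide : G5.Adj c2 a2)
          (by decide : G5.Adj a2 v01) (by decide) hx1 h2 ha2
      by_cases ha3 : 1 ≤ C a3
      · exact K6 (by decide : G5.Adj c1 c6) (by decide : G5.Adj c6 a3)
          (by decide : G5.Adj a3 v01) (by decide) hx1 h6 ha3
      by_cases hx5 : 2 ≤ C c5
      · exact K7 (by decide : G5.Adj c1 c2) (by decide : G5.Adj c2 a2)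
          (by decide : G5.Adj c5 a2) (by decide : G5.Adj a2 v01)
          (by decide) (by decide) (by decide) hx1 h2 hx5
      by_cases hx3 : 2 ≤ C c3
      · exact K7 (by decide : G5.Adj c1 c6) (by decide : G5.Adj c6 a3)
          (by decide : G5.Adj c3 a3) (by decide : G5.Adj a3 v01)
          (by decide) (by decide) (by decide) hx1 h6 hx3
      by_cases hx2 : 2 ≤ C c2
      · by_cases hx1c : 3 ≤ C c1
        · exact K5 (by decide : G5.Adj c2 c1) (by decide : G5.Adj c1 a1)
            (by decide : G5.Adj a1 v01) (by decide) hx2 hx1c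
        by_cases hx6 : 2 ≤ C c6
        · exact K9 (by decide : G5.Adj c6 c1) (by decide : G5.Adj c2 c1)
            (by decide : G5.Adj c1 a1) (by decide : G5.Adj a1 v01)
            (by decide) (by decide) (by decide) hx6 hx1 hx2
        · exfalso; omega
      · by_cases hx6 : 2 ≤ C c6
        · by_cases hx1c : 3 ≤ C c1
          · exact K5 (by decide : G5.Adj c6 c1) (by decide : G5.Adj c1 a1)
              (by decide : G5.Adj a1 v01) (by decide) hx6 hx1c
          · exfalso; omega
        · exfalso; omega
    · -- Case B : x6 = 0
      by_cases ha2 : 1 ≤ C a2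
      · exact K6 (by decide : G5.Adj c1 c2) (by decide : G5.Adj c2 a2)
          (by decide : G5.Adj a2 v01) (by decide) hx1 h2 ha2
      by_cases hx5 : 2 ≤ C c5
      · exact K7 (by decide : G5.Adj c1 c2) (by decide : G5.Adj c2 a2)
          (by decide : G5.Adj c5 a2) (by decide : G5.Adj a2 v01)
          (by decide) (by decide) (by decide) hx1 h2 hx5
      by_cases hx3c : 3 ≤ C c3
      · exact K8 (by decide : G5.Adj c1 c2) (by decide : G5.Adj c2 c3)
          (by decide : G5.Adj c3 a3) (by decide : G5.Adj a3 v01)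
          (by decide) (by decide) (by decide) hx1 h2 hx3c
      by_cases hx3 : 2 ≤ C c3
      · by_cases hx2 : 2 ≤ C c2
        · exact K9 (by decide : G5.Adj c1 c2) (by decide : G5.Adj c3 c2)
            (by decide : G5.Adj c2 a2) (by decide : G5.Adj a2 v01)
            (by decide) (by decide) (by decide) hx1 hx2 hx3
        by_cases ha3 : 1 ≤ C a3
        · exact K2 (by decide : G5.Adj c3 a3) (by decide : G5.Adj a3 v01) hx3 ha3
        · exfalso; omega
      · by_cases hx2 : 2 ≤ C c2
        · by_cases hx1c : 3 ≤ C c1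
          · exact K5 (by decide : G5.Adj c2 c1) (by decide : G5.Adj c1 a1)
              (by decide : G5.Adj a1 v01) (by decide) hx2 hx1c
          · exfalso; omega
        · exfalso; omega
  · by_cases h6 : 1 ≤ C c6
    · -- Case B' : x2 = 0
      by_cases ha3 : 1 ≤ C a3
      · exact K6 (by decide : G5.Adj c1 c6) (by decide : G5.Adj c6 a3)
          (by decide : G5.Adj a3 v01) (by decide) hx1 h6 ha3
      by_cases hx3 : 2 ≤ C c3
      · exact K7 (by decide : G5.Adj c1 c6) (by decide : G5.Adj c6 a3)
          (by decide : G5.Adj c3 a3) (by decide : G5.Adj a3 v01)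
          (by decide) (by decide) (by decide) hx1 h6 hx3
      by_cases hx5c : 3 ≤ C c5
      · exact K8 (by decide : G5.Adj c1 c6) (by decide : G5.Adj c6 c5)
          (by decide : G5.Adj c5 a2) (by decide : G5.Adj a2 v01)
          (by decide) (by decide) (by decide) hx1 h6 hx5c
      by_cases hx5 : 2 ≤ C c5
      · by_cases hx6 : 2 ≤ C c6
        · exact K9 (by decide : G5.Adj c1 c6) (by decide : G5.Adj c5 c6)
            (by decide : G5.Adj c6 a3) (by decide : G5.Adj a3 v01)
            (by decide) (by decide) (by decide) hx1 hx6 hx5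
        by_cases ha2 : 1 ≤ C a2
        · exact K2 (by decide : G5.Adj c5 a2) (by decide : G5.Adj a2 v01) hx5 ha2
        · exfalso; omega
      · by_cases hx6 : 2 ≤ C c6
        · by_cases hx1c : 3 ≤ C c1
          · exact K5 (by decide : G5.Adj c6 c1) (by decide : G5.Adj c1 a1)
              (by decide : G5.Adj a1 v01) (by decide) hx6 hx1c
          · exfalso; omega
        · exfalso; omega
    · -- Case C : x2 = x6 = 0
      by_cases hx3 : 2 ≤ C c3
      · by_cases ha3 : 1 ≤ C a3
        · exact K2 (by decide : G5.Adj c3 a3) (by decide : G5.Adj a3 v01) hx3 ha3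
        by_cases ha2 : 1 ≤ C a2
        · exact K10 (by decide : G5.Adj c1 c2) (by decide : G5.Adj c3 c2)
            (by decide : G5.Adj c2 a2) (by decide : G5.Adj a2 v01)
            (by decide) (by decide) (by decide) hx1 hx3 ha2
        by_cases hx5 : 2 ≤ C c5
        · exact K11 (by decide : G5.Adj c1 c2) (by decide : G5.Adj c3 c2)
            (by decide : G5.Adj c2 a2) (by decide : G5.Adj c5 a2) (by decide : G5.Adj a2 v01)
            (by decide) (by decide) (by decide) (by decide) (by decide) (by decide)
            hx1 hx3 hx5
        · exfalso; omega
      · by_cases hx5 : 2 ≤ C c5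
        · by_cases ha2 : 1 ≤ C a2
          · exact K2 (by decide : G5.Adj c5 a2) (by decide : G5.Adj a2 v01) hx5 ha2
          by_cases ha3 : 1 ≤ C a3
          · exact K10 (by decide : G5.Adj c1 c6) (by decide : G5.Adj c5 c6)
              (by decide : G5.Adj c6 a3) (by decide : G5.Adj a3 v01)
              (by decide) (by decide) (by decide) hx1 hx5 ha3
          · exfalso; omega
        · exfalso; omega

end PB

namespace PB

lemma comp_sum_eq (σ : Equiv.Perm (Fin 5)) (C : V5 → ℕ) :
    ∑ w, (C ∘ (vperm σ)) w = ∑ w, C w := Equiv.sum_comp (vperm σ) C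

lemma us_untransport {C : V5 → ℕ} {r : V5} (σ : Equiv.Perm (Fin 5))
    (hr : vmap σ v01 = r) (h : UnitSolvable G5 (C ∘ (vperm σ)) v01) : UnitSolvable G5 C r := by
  have h2 := us_comp (vperm σ).symm (he_symm (vperm_adj σ)) h
  have e1 : (C ∘ (vperm σ)) ∘ (vperm σ).symm = C := by
    funext x
    show C ((vperm σ) ((vperm σ).symm x)) = C x
    rw [(vperm σ).apply_symm_apply]
  have e2 : (vperm σ).symm.symm v01 = r := by rw [Equiv.symm_symm]; exact hr
  rwa [e1, e2] at h2

lemma core9_v0 (C : V5 → ℕ) (hs : 9 ≤ ∑ v, C v) (hex : ∃ v, 2 ≤ C v) :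
    UnitSolvable G5 C v01 := by
  by_cases h0 : 1 ≤ C v01
  · exact P1 h0
  obtain ⟨v, hv⟩ := hex
  by_cases hadj : G5.Adj v01 v
  · exact Pfin hadj.symm hv
  by_cases hveq : v = v01
  · exact P1 (le_trans one_le_two (hveq ▸ hv))
  obtain ⟨σ, hσ1, hσ2⟩ := exists_fix v hveq hadj
  have hsum : 9 ≤ ∑ w, (C ∘ (vperm σ)) w := by rw [comp_sum_eq]; exact hs
  have h1 : (C ∘ (vperm σ)) v01 = 0 := by
    show C (vmap σ v01) = 0; rw [hσ1]; omega
  have h2 : 2 ≤ (C ∘ (vperm σ)) c1 := by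
    show 2 ≤ C (vmap σ c1); rw [hσ2]; exact hv
  exact us_untransport σ hσ1 (core9_c1 _ hsum h1 h2)

lemma core9_all (C : V5 → ℕ) (r : V5) (hs : 9 ≤ ∑ v, C v) (hex : ∃ v, 2 ≤ C v) :
    UnitSolvable G5 C r := by
  obtain ⟨σ, hσ⟩ := exists_to r
  have hsum : 9 ≤ ∑ w, (C ∘ (vperm σ)) w := by rw [comp_sum_eq]; exact hs
  have hex' : ∃ v, 2 ≤ (C ∘ (vperm σ)) v := by
    obtain ⟨v, hv⟩ := hex
    refine ⟨(vperm σ).symm v, ?_⟩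
    show 2 ≤ C ((vperm σ) ((vperm σ).symm v))
    rw [(vperm σ).apply_symm_apply]
    exact hv
  exact us_untransport σ hσ (core9_v0 _ hsum hex')

lemma card_V5 : Fintype.card V5 = 10 := by decide

lemma L10_all (C : V5 → ℕ) (r : V5) (hs : 10 ≤ ∑ v, C v) : UnitSolvable G5 C r := by
  by_cases h0 : 1 ≤ C r
  · exact P1 h0
  by_cases hex : ∃ v, 2 ≤ C v
  · exact core9_all C r (by omega) hex
  push_neg at hex
  have := pigeon9 (C := C) (r := r) (fun v => by have := hex v; omega) (by omega)
  rw [card_V5] at this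
  omega

end PB

namespace PB
set_option maxHeartbeats 1600000 in
lemma deliver_v0 (C : V5 → ℕ) (hs : 13 ≤ ∑ v : V5, C v) (h0 : C v01 = 0) :
    ∃ C', Reach G5 C C' ∧ 1 ≤ C' v01 ∧ (∑ v : V5, C v) ≤ (∑ v : V5, C' v) + 3 ∧ ∃ w, w ≠ v01 ∧ 2 ≤ C' w := by
  by_cases hAa1 : 2 ≤ C a1
  · refine ⟨applyMove C a1 v01,
      Relation.ReflTransGen.single (mkStep (by decide : G5.Adj a1 v01) hAa1), ?_, ?_, ?_⟩
    · rw [am_tgt C (by decide : v01 ≠ a1)]; omega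
    · have s1 := sum_am hAa1 (by decide : a1 ≠ v01); omega
    · by_contra hng
      push_neg at hng
      have hz : applyMove C a1 v01 v01 = C v01 + 1 := am_tgt C (by decide : v01 ≠ a1)
      have s1 := sum_am hAa1 (by decide : a1 ≠ v01)
      have hall : ∀ w', w' ≠ v01 → applyMove C a1 v01 w' ≤ 1 :=
        fun w' hw' => by have := hng w' hw'; omega
      have hp := pigeon10 (z := v01) hall (by omega)
      rw [card_V5] at hp
      omega
  by_cases hAa2 : 2 ≤ C a2
  · refine ⟨applyMove C a2 v01,
      Relation.ReflTransGen.single (mkStep (by decide : G5.Adj a2 v01) hAa2), ?_, ?_, ?_⟩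
    · rw [am_tgt C (by decide : v01 ≠ a2)]; omega
    · have s1 := sum_am hAa2 (by decide : a2 ≠ v01); omega
    · by_contra hng
      push_neg at hng
      have hz : applyMove C a2 v01 v01 = C v01 + 1 := am_tgt C (by decide : v01 ≠ a2)
      have s1 := sum_am hAa2 (by decide : a2 ≠ v01)
      have hall : ∀ w', w' ≠ v01 → applyMove C a2 v01 w' ≤ 1 :=
        fun w' hw' => by have := hng w' hw'; omega
      have hp := pigeon10 (z := v01) hall (by omega)
      rw [card_V5] at hp
      omega
  by_cases hAa3 : 2 ≤ C a3
  · refine ⟨applyMove C a3 v01,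
      Relation.ReflTransGen.single (mkStep (by decide : G5.Adj a3 v01) hAa3), ?_, ?_, ?_⟩
    · rw [am_tgt C (by decide : v01 ≠ a3)]; omega
    · have s1 := sum_am hAa3 (by decide : a3 ≠ v01); omega
    · by_contra hng
      push_neg at hng
      have hz : applyMove C a3 v01 v01 = C v01 + 1 := am_tgt C (by decide : v01 ≠ a3)
      have s1 := sum_am hAa3 (by decide : a3 ≠ v01)
      have hall : ∀ w', w' ≠ v01 → applyMove C a3 v01 w' ≤ 1 :=
        fun w' hw' => by have := hng w' hw'; omega
      have hp := pigeon10 (z := v01) hall (by omega)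
      rw [card_V5] at hp
      omega
  by_cases hBc1 : 2 ≤ C c1 ∧ 1 ≤ C a1
  · obtain ⟨hb1, hb2⟩ := hBc1
    have e1 : applyMove C c1 a1 a1 = C a1 + 1 := am_tgt C (by decide : a1 ≠ c1)
    have hleg : 2 ≤ applyMove C c1 a1 a1 := by omega
    refine ⟨applyMove (applyMove C c1 a1) a1 v01,
      reach_cons (by decide : G5.Adj c1 a1) hb1
        (Relation.ReflTransGen.single (mkStep (by decide : G5.Adj a1 v01) hleg)), ?_, ?_, ?_⟩
    · rw [am_tgt _ (by decide : v01 ≠ a1)]; omega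
    · have s1 := sum_am hb1 (by decide : c1 ≠ a1)
      have s2 := sum_am hleg (by decide : a1 ≠ v01)
      omega
    · by_contra hng
      push_neg at hng
      have hz : applyMove (applyMove C c1 a1) a1 v01 v01 = applyMove C c1 a1 v01 + 1 :=
        am_tgt _ (by decide : v01 ≠ a1)
      have hz2 : applyMove C c1 a1 v01 = C v01 := am_other C (by decide) (by decide)
      have s1 := sum_am hb1 (by decide : c1 ≠ a1)
      have s2 := sum_am hleg (by decide : a1 ≠ v01)
      have hall : ∀ w', w' ≠ v01 → applyMove (applyMove C c1 a1) a1 v01 w' ≤ 1 :=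
        fun w' hw' => by have := hng w' hw'; omega
      have hp := pigeon10 (z := v01) hall (by omega)
      rw [card_V5] at hp
      omega
  by_cases hBc4 : 2 ≤ C c4 ∧ 1 ≤ C a1
  · obtain ⟨hb1, hb2⟩ := hBc4
    have e1 : applyMove C c4 a1 a1 = C a1 + 1 := am_tgt C (by decide : a1 ≠ c4)
    have hleg : 2 ≤ applyMove C c4 a1 a1 := by omega
    refine ⟨applyMove (applyMove C c4 a1) a1 v01,
      reach_cons (by decide : G5.Adj c4 a1) hb1
        (Relation.ReflTransGen.single (mkStep (by decide : G5.Adj a1 v01) hleg)), ?_, ?_, ?_⟩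
    · rw [am_tgt _ (by decide : v01 ≠ a1)]; omega
    · have s1 := sum_am hb1 (by decide : c4 ≠ a1)
      have s2 := sum_am hleg (by decide : a1 ≠ v01)
      omega
    · by_contra hng
      push_neg at hng
      have hz : applyMove (applyMove C c4 a1) a1 v01 v01 = applyMove C c4 a1 v01 + 1 :=
        am_tgt _ (by decide : v01 ≠ a1)
      have hz2 : applyMove C c4 a1 v01 = C v01 := am_other C (by decide) (by decide)
      have s1 := sum_am hb1 (by decide : c4 ≠ a1)
      have s2 := sum_am hleg (by decide : a1 ≠ v01)
      have hall : ∀ w', w' ≠ v01 → applyMove (applyMove C c4 a1) a1 v01 w' ≤ 1 :=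
        fun w' hw' => by have := hng w' hw'; omega
      have hp := pigeon10 (z := v01) hall (by omega)
      rw [card_V5] at hp
      omega
  by_cases hBc2 : 2 ≤ C c2 ∧ 1 ≤ C a2
  · obtain ⟨hb1, hb2⟩ := hBc2
    have e1 : applyMove C c2 a2 a2 = C a2 + 1 := am_tgt C (by decide : a2 ≠ c2)
    have hleg : 2 ≤ applyMove C c2 a2 a2 := by omega
    refine ⟨applyMove (applyMove C c2 a2) a2 v01,
      reach_cons (by decide : G5.Adj c2 a2) hb1
        (Relation.ReflTransGen.single (mkStep (by decide : G5.Adj a2 v01) hleg)), ?_, ?_, ?_⟩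
    · rw [am_tgt _ (by decide : v01 ≠ a2)]; omega
    · have s1 := sum_am hb1 (by decide : c2 ≠ a2)
      have s2 := sum_am hleg (by decide : a2 ≠ v01)
      omega
    · by_contra hng
      push_neg at hng
      have hz : applyMove (applyMove C c2 a2) a2 v01 v01 = applyMove C c2 a2 v01 + 1 :=
        am_tgt _ (by decide : v01 ≠ a2)
      have hz2 : applyMove C c2 a2 v01 = C v01 := am_other C (by decide) (by decide)
      have s1 := sum_am hb1 (by decide : c2 ≠ a2)
      have s2 := sum_am hleg (by decide : a2 ≠ v01)
      have hall : ∀ w', w' ≠ v01 → applyMove (applyMove C c2 a2) a2 v01 w' ≤ 1 :=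
        fun w' hw' => by have := hng w' hw'; omega
      have hp := pigeon10 (z := v01) hall (by omega)
      rw [card_V5] at hp
      omega
  by_cases hBc5 : 2 ≤ C c5 ∧ 1 ≤ C a2
  · obtain ⟨hb1, hb2⟩ := hBc5
    have e1 : applyMove C c5 a2 a2 = C a2 + 1 := am_tgt C (by decide : a2 ≠ c5)
    have hleg : 2 ≤ applyMove C c5 a2 a2 := by omega
    refine ⟨applyMove (applyMove C c5 a2) a2 v01,
      reach_cons (by decide : G5.Adj c5 a2) hb1
        (Relation.ReflTransGen.single (mkStep (by decide : G5.Adj a2 v01) hleg)), ?_, ?_, ?_⟩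
    · rw [am_tgt _ (by decide : v01 ≠ a2)]; omega
    · have s1 := sum_am hb1 (by decide : c5 ≠ a2)
      have s2 := sum_am hleg (by decide : a2 ≠ v01)
      omega
    · by_contra hng
      push_neg at hng
      have hz : applyMove (applyMove C c5 a2) a2 v01 v01 = applyMove C c5 a2 v01 + 1 :=
        am_tgt _ (by decide : v01 ≠ a2)
      have hz2 : applyMove C c5 a2 v01 = C v01 := am_other C (by decide) (by decide)
      have s1 := sum_am hb1 (by decide : c5 ≠ a2)
      have s2 := sum_am hleg (by decide : a2 ≠ v01)
      have hall : ∀ w', w' ≠ v01 → applyMove (applyMove C c5 a2) a2 v01 w' ≤ 1 :=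
        fun w' hw' => by have := hng w' hw'; omega
      have hp := pigeon10 (z := v01) hall (by omega)
      rw [card_V5] at hp
      omega
  by_cases hBc3 : 2 ≤ C c3 ∧ 1 ≤ C a3
  · obtain ⟨hb1, hb2⟩ := hBc3
    have e1 : applyMove C c3 a3 a3 = C a3 + 1 := am_tgt C (by decide : a3 ≠ c3)
    have hleg : 2 ≤ applyMove C c3 a3 a3 := by omega
    refine ⟨applyMove (applyMove C c3 a3) a3 v01,
      reach_cons (by decide : G5.Adj c3 a3) hb1
        (Relation.ReflTransGen.single (mkStep (by decide : G5.Adj a3 v01) hleg)), ?_, ?_, ?_⟩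
    · rw [am_tgt _ (by decide : v01 ≠ a3)]; omega
    · have s1 := sum_am hb1 (by decide : c3 ≠ a3)
      have s2 := sum_am hleg (by decide : a3 ≠ v01)
      omega
    · by_contra hng
      push_neg at hng
      have hz : applyMove (applyMove C c3 a3) a3 v01 v01 = applyMove C c3 a3 v01 + 1 :=
        am_tgt _ (by decide : v01 ≠ a3)
      have hz2 : applyMove C c3 a3 v01 = C v01 := am_other C (by decide) (by decide)
      have s1 := sum_am hb1 (by decide : c3 ≠ a3)
      have s2 := sum_am hleg (by decide : a3 ≠ v01)
      have hall : ∀ w', w' ≠ v01 → applyMove (applyMove C c3 a3) a3 v01 w' ≤ 1 :=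
        fun w' hw' => by have := hng w' hw'; omega
      have hp := pigeon10 (z := v01) hall (by omega)
      rw [card_V5] at hp
      omega
  by_cases hBc6 : 2 ≤ C c6 ∧ 1 ≤ C a3
  · obtain ⟨hb1, hb2⟩ := hBc6
    have e1 : applyMove C c6 a3 a3 = C a3 + 1 := am_tgt C (by decide : a3 ≠ c6)
    have hleg : 2 ≤ applyMove C c6 a3 a3 := by omega
    refine ⟨applyMove (applyMove C c6 a3) a3 v01,
      reach_cons (by decide : G5.Adj c6 a3) hb1
        (Relation.ReflTransGen.single (mkStep (by decide : G5.Adj a3 v01) hleg)), ?_, ?_, ?_⟩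
    · rw [am_tgt _ (by decide : v01 ≠ a3)]; omega
    · have s1 := sum_am hb1 (by decide : c6 ≠ a3)
      have s2 := sum_am hleg (by decide : a3 ≠ v01)
      omega
    · by_contra hng
      push_neg at hng
      have hz : applyMove (applyMove C c6 a3) a3 v01 v01 = applyMove C c6 a3 v01 + 1 :=
        am_tgt _ (by decide : v01 ≠ a3)
      have hz2 : applyMove C c6 a3 v01 = C v01 := am_other C (by decide) (by decide)
      have s1 := sum_am hb1 (by decide : c6 ≠ a3)
      have s2 := sum_am hleg (by decide : a3 ≠ v01)
      have hall : ∀ w', w' ≠ v01 → applyMove (applyMove C c6 a3) a3 v01 w' ≤ 1 :=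
        fun w' hw' => by have := hng w' hw'; omega
      have hp := pigeon10 (z := v01) hall (by omega)
      rw [card_V5] at hp
      omega
  by_cases hPc1 : 4 ≤ C c1
  · have e1 : applyMove C c1 a1 c1 = C c1 - 2 := am_src C c1 a1
    have hleg2 : 2 ≤ applyMove C c1 a1 c1 := by omega
    have e2 : applyMove C c1 a1 a1 = C a1 + 1 := am_tgt C (by decide : a1 ≠ c1)
    have e3 : applyMove (applyMove C c1 a1) c1 a1 a1 = applyMove C c1 a1 a1 + 1 :=
      am_tgt _ (by decide : a1 ≠ c1)
    have hleg3 : 2 ≤ applyMove (applyMove C c1 a1) c1 a1 a1 := by omega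
    refine ⟨applyMove (applyMove (applyMove C c1 a1) c1 a1) a1 v01,
      reach_cons (by decide : G5.Adj c1 a1) (by omega)
        (reach_cons (by decide : G5.Adj c1 a1) hleg2
          (Relation.ReflTransGen.single (mkStep (by decide : G5.Adj a1 v01) hleg3))), ?_, ?_, ?_⟩
    · rw [am_tgt _ (by decide : v01 ≠ a1)]; omega
    · have s1 := sum_am (show 2 ≤ C c1 by omega) (by decide : c1 ≠ a1)
      have s2 := sum_am hleg2 (by decide : c1 ≠ a1)
      have s3 := sum_am hleg3 (by decide : a1 ≠ v01)
      omega
    · by_contra hng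
      push_neg at hng
      have hu0 : C a1 = 0 := by omega
      have f1 : applyMove (applyMove (applyMove C c1 a1) c1 a1) a1 v01 a1
          = applyMove (applyMove C c1 a1) c1 a1 a1 - 2 := am_src _ _ _
      have f2 : applyMove (applyMove (applyMove C c1 a1) c1 a1) a1 v01 v01
          = applyMove (applyMove C c1 a1) c1 a1 v01 + 1 := am_tgt _ (by decide : v01 ≠ a1)
      have f3 : applyMove (applyMove C c1 a1) c1 a1 v01 = applyMove C c1 a1 v01 :=
        am_other _ (by decide) (by decide)
      have f4 : applyMove C c1 a1 v01 = C v01 := am_other C (by decide) (by decide)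
      have hall : ∀ w', w' ≠ v01 → applyMove (applyMove (applyMove C c1 a1) c1 a1) a1 v01 w' ≤ 1 :=
        fun w' hw' => by have := hng w' hw'; omega
      have hp := pigeon_aux (z := v01) (u := a1) hall (by omega) (by omega) (by decide)
      rw [card_V5] at hp
      have s1 := sum_am (show 2 ≤ C c1 by omega) (by decide : c1 ≠ a1)
      have s2 := sum_am hleg2 (by decide : c1 ≠ a1)
      have s3 := sum_am hleg3 (by decide : a1 ≠ v01)
      omega
  by_cases hPc4 : 4 ≤ C c4
  · have e1 : applyMove C c4 a1 c4 = C c4 - 2 := am_src C c4 a1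
    have hleg2 : 2 ≤ applyMove C c4 a1 c4 := by omega
    have e2 : applyMove C c4 a1 a1 = C a1 + 1 := am_tgt C (by decide : a1 ≠ c4)
    have e3 : applyMove (applyMove C c4 a1) c4 a1 a1 = applyMove C c4 a1 a1 + 1 :=
      am_tgt _ (by decide : a1 ≠ c4)
    have hleg3 : 2 ≤ applyMove (applyMove C c4 a1) c4 a1 a1 := by omega
    refine ⟨applyMove (applyMove (applyMove C c4 a1) c4 a1) a1 v01,
      reach_cons (by decide : G5.Adj c4 a1) (by omega)
        (reach_cons (by decide : G5.Adj c4 a1) hleg2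
          (Relation.ReflTransGen.single (mkStep (by decide : G5.Adj a1 v01) hleg3))), ?_, ?_, ?_⟩
    · rw [am_tgt _ (by decide : v01 ≠ a1)]; omega
    · have s1 := sum_am (show 2 ≤ C c4 by omega) (by decide : c4 ≠ a1)
      have s2 := sum_am hleg2 (by decide : c4 ≠ a1)
      have s3 := sum_am hleg3 (by decide : a1 ≠ v01)
      omega
    · by_contra hng
      push_neg at hng
      have hu0 : C a1 = 0 := by omega
      have f1 : applyMove (applyMove (applyMove C c4 a1) c4 a1) a1 v01 a1
          = applyMove (applyMove C c4 a1) c4 a1 a1 - 2 := am_src _ _ _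
      have f2 : applyMove (applyMove (applyMove C c4 a1) c4 a1) a1 v01 v01
          = applyMove (applyMove C c4 a1) c4 a1 v01 + 1 := am_tgt _ (by decide : v01 ≠ a1)
      have f3 : applyMove (applyMove C c4 a1) c4 a1 v01 = applyMove C c4 a1 v01 :=
        am_other _ (by decide) (by decide)
      have f4 : applyMove C c4 a1 v01 = C v01 := am_other C (by decide) (by decide)
      have hall : ∀ w', w' ≠ v01 → applyMove (applyMove (applyMove C c4 a1) c4 a1) a1 v01 w' ≤ 1 :=
        fun w' hw' => by have := hng w' hw'; omega
      have hp := pigeon_aux (z := v01) (u := a1) hall (by omega) (by omega) (by decide)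
      rw [card_V5] at hp
      have s1 := sum_am (show 2 ≤ C c4 by omega) (by decide : c4 ≠ a1)
      have s2 := sum_am hleg2 (by decide : c4 ≠ a1)
      have s3 := sum_am hleg3 (by decide : a1 ≠ v01)
      omega
  by_cases hPc2 : 4 ≤ C c2
  · have e1 : applyMove C c2 a2 c2 = C c2 - 2 := am_src C c2 a2
    have hleg2 : 2 ≤ applyMove C c2 a2 c2 := by omega
    have e2 : applyMove C c2 a2 a2 = C a2 + 1 := am_tgt C (by decide : a2 ≠ c2)
    have e3 : applyMove (applyMove C c2 a2) c2 a2 a2 = applyMove C c2 a2 a2 + 1 :=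
      am_tgt _ (by decide : a2 ≠ c2)
    have hleg3 : 2 ≤ applyMove (applyMove C c2 a2) c2 a2 a2 := by omega
    refine ⟨applyMove (applyMove (applyMove C c2 a2) c2 a2) a2 v01,
      reach_cons (by decide : G5.Adj c2 a2) (by omega)
        (reach_cons (by decide : G5.Adj c2 a2) hleg2
          (Relation.ReflTransGen.single (mkStep (by decide : G5.Adj a2 v01) hleg3))), ?_, ?_, ?_⟩
    · rw [am_tgt _ (by decide : v01 ≠ a2)]; omega
    · have s1 := sum_am (show 2 ≤ C c2 by omega) (by decide : c2 ≠ a2)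
      have s2 := sum_am hleg2 (by decide : c2 ≠ a2)
      have s3 := sum_am hleg3 (by decide : a2 ≠ v01)
      omega
    · by_contra hng
      push_neg at hng
      have hu0 : C a2 = 0 := by omega
      have f1 : applyMove (applyMove (applyMove C c2 a2) c2 a2) a2 v01 a2
          = applyMove (applyMove C c2 a2) c2 a2 a2 - 2 := am_src _ _ _
      have f2 : applyMove (applyMove (applyMove C c2 a2) c2 a2) a2 v01 v01
          = applyMove (applyMove C c2 a2) c2 a2 v01 + 1 := am_tgt _ (by decide : v01 ≠ a2)
      have f3 : applyMove (applyMove C c2 a2) c2 a2 v01 = applyMove C c2 a2 v01 :=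
        am_other _ (by decide) (by decide)
      have f4 : applyMove C c2 a2 v01 = C v01 := am_other C (by decide) (by decide)
      have hall : ∀ w', w' ≠ v01 → applyMove (applyMove (applyMove C c2 a2) c2 a2) a2 v01 w' ≤ 1 :=
        fun w' hw' => by have := hng w' hw'; omega
      have hp := pigeon_aux (z := v01) (u := a2) hall (by omega) (by omega) (by decide)
      rw [card_V5] at hp
      have s1 := sum_am (show 2 ≤ C c2 by omega) (by decide : c2 ≠ a2)
      have s2 := sum_am hleg2 (by decide : c2 ≠ a2)
      have s3 := sum_am hleg3 (by decide : a2 ≠ v01)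
      omega
  by_cases hPc5 : 4 ≤ C c5
  · have e1 : applyMove C c5 a2 c5 = C c5 - 2 := am_src C c5 a2
    have hleg2 : 2 ≤ applyMove C c5 a2 c5 := by omega
    have e2 : applyMove C c5 a2 a2 = C a2 + 1 := am_tgt C (by decide : a2 ≠ c5)
    have e3 : applyMove (applyMove C c5 a2) c5 a2 a2 = applyMove C c5 a2 a2 + 1 :=
      am_tgt _ (by decide : a2 ≠ c5)
    have hleg3 : 2 ≤ applyMove (applyMove C c5 a2) c5 a2 a2 := by omega
    refine ⟨applyMove (applyMove (applyMove C c5 a2) c5 a2) a2 v01,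
      reach_cons (by decide : G5.Adj c5 a2) (by omega)
        (reach_cons (by decide : G5.Adj c5 a2) hleg2
          (Relation.ReflTransGen.single (mkStep (by decide : G5.Adj a2 v01) hleg3))), ?_, ?_, ?_⟩
    · rw [am_tgt _ (by decide : v01 ≠ a2)]; omega
    · have s1 := sum_am (show 2 ≤ C c5 by omega) (by decide : c5 ≠ a2)
      have s2 := sum_am hleg2 (by decide : c5 ≠ a2)
      have s3 := sum_am hleg3 (by decide : a2 ≠ v01)
      omega
    · by_contra hng
      push_neg at hng
      have hu0 : C a2 = 0 := by omega
      have f1 : applyMove (applyMove (applyMove C c5 a2) c5 a2) a2 v01 a2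
          = applyMove (applyMove C c5 a2) c5 a2 a2 - 2 := am_src _ _ _
      have f2 : applyMove (applyMove (applyMove C c5 a2) c5 a2) a2 v01 v01
          = applyMove (applyMove C c5 a2) c5 a2 v01 + 1 := am_tgt _ (by decide : v01 ≠ a2)
      have f3 : applyMove (applyMove C c5 a2) c5 a2 v01 = applyMove C c5 a2 v01 :=
        am_other _ (by decide) (by decide)
      have f4 : applyMove C c5 a2 v01 = C v01 := am_other C (by decide) (by decide)
      have hall : ∀ w', w' ≠ v01 → applyMove (applyMove (applyMove C c5 a2) c5 a2) a2 v01 w' ≤ 1 :=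
        fun w' hw' => by have := hng w' hw'; omega
      have hp := pigeon_aux (z := v01) (u := a2) hall (by omega) (by omega) (by decide)
      rw [card_V5] at hp
      have s1 := sum_am (show 2 ≤ C c5 by omega) (by decide : c5 ≠ a2)
      have s2 := sum_am hleg2 (by decide : c5 ≠ a2)
      have s3 := sum_am hleg3 (by decide : a2 ≠ v01)
      omega
  by_cases hPc3 : 4 ≤ C c3
  · have e1 : applyMove C c3 a3 c3 = C c3 - 2 := am_src C c3 a3
    have hleg2 : 2 ≤ applyMove C c3 a3 c3 := by omega
    have e2 : applyMove C c3 a3 a3 = C a3 + 1 := am_tgt C (by decide : a3 ≠ c3)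
    have e3 : applyMove (applyMove C c3 a3) c3 a3 a3 = applyMove C c3 a3 a3 + 1 :=
      am_tgt _ (by decide : a3 ≠ c3)
    have hleg3 : 2 ≤ applyMove (applyMove C c3 a3) c3 a3 a3 := by omega
    refine ⟨applyMove (applyMove (applyMove C c3 a3) c3 a3) a3 v01,
      reach_cons (by decide : G5.Adj c3 a3) (by omega)
        (reach_cons (by decide : G5.Adj c3 a3) hleg2
          (Relation.ReflTransGen.single (mkStep (by decide : G5.Adj a3 v01) hleg3))), ?_, ?_, ?_⟩
    · rw [am_tgt _ (by decide : v01 ≠ a3)]; omega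
    · have s1 := sum_am (show 2 ≤ C c3 by omega) (by decide : c3 ≠ a3)
      have s2 := sum_am hleg2 (by decide : c3 ≠ a3)
      have s3 := sum_am hleg3 (by decide : a3 ≠ v01)
      omega
    · by_contra hng
      push_neg at hng
      have hu0 : C a3 = 0 := by omega
      have f1 : applyMove (applyMove (applyMove C c3 a3) c3 a3) a3 v01 a3
          = applyMove (applyMove C c3 a3) c3 a3 a3 - 2 := am_src _ _ _
      have f2 : applyMove (applyMove (applyMove C c3 a3) c3 a3) a3 v01 v01
          = applyMove (applyMove C c3 a3) c3 a3 v01 + 1 := am_tgt _ (by decide : v01 ≠ a3)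
      have f3 : applyMove (applyMove C c3 a3) c3 a3 v01 = applyMove C c3 a3 v01 :=
        am_other _ (by decide) (by decide)
      have f4 : applyMove C c3 a3 v01 = C v01 := am_other C (by decide) (by decide)
      have hall : ∀ w', w' ≠ v01 → applyMove (applyMove (applyMove C c3 a3) c3 a3) a3 v01 w' ≤ 1 :=
        fun w' hw' => by have := hng w' hw'; omega
      have hp := pigeon_aux (z := v01) (u := a3) hall (by omega) (by omega) (by decide)
      rw [card_V5] at hp
      have s1 := sum_am (show 2 ≤ C c3 by omega) (by decide : c3 ≠ a3)
      have s2 := sum_am hleg2 (by decide : c3 ≠ a3)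
      have s3 := sum_am hleg3 (by decide : a3 ≠ v01)
      omega
  by_cases hPc6 : 4 ≤ C c6
  · have e1 : applyMove C c6 a3 c6 = C c6 - 2 := am_src C c6 a3
    have hleg2 : 2 ≤ applyMove C c6 a3 c6 := by omega
    have e2 : applyMove C c6 a3 a3 = C a3 + 1 := am_tgt C (by decide : a3 ≠ c6)
    have e3 : applyMove (applyMove C c6 a3) c6 a3 a3 = applyMove C c6 a3 a3 + 1 :=
      am_tgt _ (by decide : a3 ≠ c6)
    have hleg3 : 2 ≤ applyMove (applyMove C c6 a3) c6 a3 a3 := by omega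
    refine ⟨applyMove (applyMove (applyMove C c6 a3) c6 a3) a3 v01,
      reach_cons (by decide : G5.Adj c6 a3) (by omega)
        (reach_cons (by decide : G5.Adj c6 a3) hleg2
          (Relation.ReflTransGen.single (mkStep (by decide : G5.Adj a3 v01) hleg3))), ?_, ?_, ?_⟩
    · rw [am_tgt _ (by decide : v01 ≠ a3)]; omega
    · have s1 := sum_am (show 2 ≤ C c6 by omega) (by decide : c6 ≠ a3)
      have s2 := sum_am hleg2 (by decide : c6 ≠ a3)
      have s3 := sum_am hleg3 (by decide : a3 ≠ v01)
      omega
    · by_contra hng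
      push_neg at hng
      have hu0 : C a3 = 0 := by omega
      have f1 : applyMove (applyMove (applyMove C c6 a3) c6 a3) a3 v01 a3
          = applyMove (applyMove C c6 a3) c6 a3 a3 - 2 := am_src _ _ _
      have f2 : applyMove (applyMove (applyMove C c6 a3) c6 a3) a3 v01 v01
          = applyMove (applyMove C c6 a3) c6 a3 v01 + 1 := am_tgt _ (by decide : v01 ≠ a3)
      have f3 : applyMove (applyMove C c6 a3) c6 a3 v01 = applyMove C c6 a3 v01 :=
        am_other _ (by decide) (by decide)
      have f4 : applyMove C c6 a3 v01 = C v01 := am_other C (by decide) (by decide)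
      have hall : ∀ w', w' ≠ v01 → applyMove (applyMove (applyMove C c6 a3) c6 a3) a3 v01 w' ≤ 1 :=
        fun w' hw' => by have := hng w' hw'; omega
      have hp := pigeon_aux (z := v01) (u := a3) hall (by omega) (by omega) (by decide)
      rw [card_V5] at hp
      have s1 := sum_am (show 2 ≤ C c6 by omega) (by decide : c6 ≠ a3)
      have s2 := sum_am hleg2 (by decide : c6 ≠ a3)
      have s3 := sum_am hleg3 (by decide : a3 ≠ v01)
      omega
  by_cases hD0 : 2 ≤ C c1 ∧ 2 ≤ C c4
  · obtain ⟨hd1, hd2⟩ := hD0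
    have e1 : applyMove C c1 a1 c4 = C c4 := am_other C (by decide) (by decide)
    have hleg2 : 2 ≤ applyMove C c1 a1 c4 := by omega
    have e2 : applyMove C c1 a1 a1 = C a1 + 1 := am_tgt C (by decide : a1 ≠ c1)
    have e3 : applyMove (applyMove C c1 a1) c4 a1 a1 = applyMove C c1 a1 a1 + 1 :=
      am_tgt _ (by decide : a1 ≠ c4)
    have hleg3 : 2 ≤ applyMove (applyMove C c1 a1) c4 a1 a1 := by omega
    refine ⟨applyMove (applyMove (applyMove C c1 a1) c4 a1) a1 v01,
      reach_cons (by decide : G5.Adj c1 a1) hd1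
        (reach_cons (by decide : G5.Adj c4 a1) hleg2
          (Relation.ReflTransGen.single (mkStep (by decide : G5.Adj a1 v01) hleg3))), ?_, ?_, ?_⟩
    · rw [am_tgt _ (by decide : v01 ≠ a1)]; omega
    · have s1 := sum_am hd1 (by decide : c1 ≠ a1)
      have s2 := sum_am hleg2 (by decide : c4 ≠ a1)
      have s3 := sum_am hleg3 (by decide : a1 ≠ v01)
      omega
    · by_contra hng
      push_neg at hng
      have hu0 : C a1 = 0 := by omega
      have f1 : applyMove (applyMove (applyMove C c1 a1) c4 a1) a1 v01 a1
          = applyMove (applyMove C c1 a1) c4 a1 a1 - 2 := am_src _ _ _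
      have f2 : applyMove (applyMove (applyMove C c1 a1) c4 a1) a1 v01 v01
          = applyMove (applyMove C c1 a1) c4 a1 v01 + 1 := am_tgt _ (by decide : v01 ≠ a1)
      have f3 : applyMove (applyMove C c1 a1) c4 a1 v01 = applyMove C c1 a1 v01 :=
        am_other _ (by decide) (by decide)
      have f4 : applyMove C c1 a1 v01 = C v01 := am_other C (by decide) (by decide)
      have hall : ∀ w', w' ≠ v01 → applyMove (applyMove (applyMove C c1 a1) c4 a1) a1 v01 w' ≤ 1 :=
        fun w' hw' => by have := hng w' hw'; omega
      have hp := pigeon_aux (z := v01) (u := a1) hall (by omega) (by omega) (by decide)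
      rw [card_V5] at hp
      have s1 := sum_am hd1 (by decide : c1 ≠ a1)
      have s2 := sum_am hleg2 (by decide : c4 ≠ a1)
      have s3 := sum_am hleg3 (by decide : a1 ≠ v01)
      omega
  by_cases hD1 : 2 ≤ C c2 ∧ 2 ≤ C c5
  · obtain ⟨hd1, hd2⟩ := hD1
    have e1 : applyMove C c2 a2 c5 = C c5 := am_other C (by decide) (by decide)
    have hleg2 : 2 ≤ applyMove C c2 a2 c5 := by omega
    have e2 : applyMove C c2 a2 a2 = C a2 + 1 := am_tgt C (by decide : a2 ≠ c2)
    have e3 : applyMove (applyMove C c2 a2) c5 a2 a2 = applyMove C c2 a2 a2 + 1 :=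
      am_tgt _ (by decide : a2 ≠ c5)
    have hleg3 : 2 ≤ applyMove (applyMove C c2 a2) c5 a2 a2 := by omega
    refine ⟨applyMove (applyMove (applyMove C c2 a2) c5 a2) a2 v01,
      reach_cons (by decide : G5.Adj c2 a2) hd1
        (reach_cons (by decide : G5.Adj c5 a2) hleg2
          (Relation.ReflTransGen.single (mkStep (by decide : G5.Adj a2 v01) hleg3))), ?_, ?_, ?_⟩
    · rw [am_tgt _ (by decide : v01 ≠ a2)]; omega
    · have s1 := sum_am hd1 (by decide : c2 ≠ a2)
      have s2 := sum_am hleg2 (by decide : c5 ≠ a2)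
      have s3 := sum_am hleg3 (by decide : a2 ≠ v01)
      omega
    · by_contra hng
      push_neg at hng
      have hu0 : C a2 = 0 := by omega
      have f1 : applyMove (applyMove (applyMove C c2 a2) c5 a2) a2 v01 a2
          = applyMove (applyMove C c2 a2) c5 a2 a2 - 2 := am_src _ _ _
      have f2 : applyMove (applyMove (applyMove C c2 a2) c5 a2) a2 v01 v01
          = applyMove (applyMove C c2 a2) c5 a2 v01 + 1 := am_tgt _ (by decide : v01 ≠ a2)
      have f3 : applyMove (applyMove C c2 a2) c5 a2 v01 = applyMove C c2 a2 v01 :=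
        am_other _ (by decide) (by decide)
      have f4 : applyMove C c2 a2 v01 = C v01 := am_other C (by decide) (by decide)
      have hall : ∀ w', w' ≠ v01 → applyMove (applyMove (applyMove C c2 a2) c5 a2) a2 v01 w' ≤ 1 :=
        fun w' hw' => by have := hng w' hw'; omega
      have hp := pigeon_aux (z := v01) (u := a2) hall (by omega) (by omega) (by decide)
      rw [card_V5] at hp
      have s1 := sum_am hd1 (by decide : c2 ≠ a2)
      have s2 := sum_am hleg2 (by decide : c5 ≠ a2)
      have s3 := sum_am hleg3 (by decide : a2 ≠ v01)
      omega
  by_cases hD2 : 2 ≤ C c3 ∧ 2 ≤ C c6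
  · obtain ⟨hd1, hd2⟩ := hD2
    have e1 : applyMove C c3 a3 c6 = C c6 := am_other C (by decide) (by decide)
    have hleg2 : 2 ≤ applyMove C c3 a3 c6 := by omega
    have e2 : applyMove C c3 a3 a3 = C a3 + 1 := am_tgt C (by decide : a3 ≠ c3)
    have e3 : applyMove (applyMove C c3 a3) c6 a3 a3 = applyMove C c3 a3 a3 + 1 :=
      am_tgt _ (by decide : a3 ≠ c6)
    have hleg3 : 2 ≤ applyMove (applyMove C c3 a3) c6 a3 a3 := by omega
    refine ⟨applyMove (applyMove (applyMove C c3 a3) c6 a3) a3 v01,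
      reach_cons (by decide : G5.Adj c3 a3) hd1
        (reach_cons (by decide : G5.Adj c6 a3) hleg2
          (Relation.ReflTransGen.single (mkStep (by decide : G5.Adj a3 v01) hleg3))), ?_, ?_, ?_⟩
    · rw [am_tgt _ (by decide : v01 ≠ a3)]; omega
    · have s1 := sum_am hd1 (by decide : c3 ≠ a3)
      have s2 := sum_am hleg2 (by decide : c6 ≠ a3)
      have s3 := sum_am hleg3 (by decide : a3 ≠ v01)
      omega
    · by_contra hng
      push_neg at hng
      have hu0 : C a3 = 0 := by omega
      have f1 : applyMove (applyMove (applyMove C c3 a3) c6 a3) a3 v01 a3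
          = applyMove (applyMove C c3 a3) c6 a3 a3 - 2 := am_src _ _ _
      have f2 : applyMove (applyMove (applyMove C c3 a3) c6 a3) a3 v01 v01
          = applyMove (applyMove C c3 a3) c6 a3 v01 + 1 := am_tgt _ (by decide : v01 ≠ a3)
      have f3 : applyMove (applyMove C c3 a3) c6 a3 v01 = applyMove C c3 a3 v01 :=
        am_other _ (by decide) (by decide)
      have f4 : applyMove C c3 a3 v01 = C v01 := am_other C (by decide) (by decide)
      have hall : ∀ w', w' ≠ v01 → applyMove (applyMove (applyMove C c3 a3) c6 a3) a3 v01 w' ≤ 1 :=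
        fun w' hw' => by have := hng w' hw'; omega
      have hp := pigeon_aux (z := v01) (u := a3) hall (by omega) (by omega) (by decide)
      rw [card_V5] at hp
      have s1 := sum_am hd1 (by decide : c3 ≠ a3)
      have s2 := sum_am hleg2 (by decide : c6 ≠ a3)
      have s3 := sum_am hleg3 (by decide : a3 ≠ v01)
      omega
  exfalso
  rw [sumV5] at hs
  omega

end PB

namespace PB

lemma deliver_all (C : V5 → ℕ) (r : V5) (hs : 13 ≤ ∑ v : V5, C v) (h0 : C r = 0) :
    ∃ C', Reach G5 C C' ∧ 1 ≤ C' r ∧ (∑ v : V5, C v) ≤ (∑ v : V5, C' v) + 3 ∧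
      ∃ w, w ≠ r ∧ 2 ≤ C' w := by
  obtain ⟨σ, hσ⟩ := exists_to r
  have hs' : 13 ≤ ∑ v : V5, (C ∘ (vperm σ)) v := by
    rw [show (∑ v : V5, (C ∘ (vperm σ)) v) = ∑ v : V5, C v from Equiv.sum_comp (vperm σ) C]
    exact hs
  have h0' : (C ∘ (vperm σ)) v01 = 0 := by show C (vmap σ v01) = 0; rw [hσ]; exact h0
  obtain ⟨B, hreach, hBr, hBsum, w, hwr, hw2⟩ := deliver_v0 (C ∘ (vperm σ)) hs' h0'
  have hesymm : (vperm σ).symm r = v01 := by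
    rw [Equiv.symm_apply_eq]; exact hσ.symm
  refine ⟨B ∘ (vperm σ).symm, ?_, ?_, ?_, ?_⟩
  · have h := reach_comp (vperm σ).symm (he_symm (vperm_adj σ)) hreach
    have heq : (C ∘ (vperm σ)) ∘ (vperm σ).symm = C := by
      funext x
      show C ((vperm σ) ((vperm σ).symm x)) = C x
      rw [(vperm σ).apply_symm_apply]
    rwa [heq] at h
  · show 1 ≤ B ((vperm σ).symm r)
    rw [hesymm]; exact hBr
  · have h1 : (∑ v : V5, (B ∘ (vperm σ).symm) v) = ∑ v : V5, B v :=
      Equiv.sum_comp (vperm σ).symm B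
    have h2 : (∑ v : V5, (C ∘ (vperm σ)) v) = ∑ v : V5, C v := Equiv.sum_comp (vperm σ) C
    omega
  · refine ⟨(vperm σ) w, ?_, ?_⟩
    · intro h
      apply hwr
      have : (vperm σ).symm ((vperm σ) w) = (vperm σ).symm r := by rw [h]
      rwa [(vperm σ).symm_apply_apply, hesymm] at this
    · show 2 ≤ B ((vperm σ).symm ((vperm σ) w))
      rw [(vperm σ).symm_apply_apply]
      exact hw2

lemma exists_pos {D : V5 → ℕ} (h : 1 ≤ ∑ v : V5, D v) : ∃ r, 1 ≤ D r := by
  by_contra h'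
  push_neg at h'
  have : (∑ v : V5, D v) = 0 := Finset.sum_eq_zero (fun v _ => by have := h' v; omega)
  omega

lemma pair_le {D : V5 → ℕ} {r w : V5} (hne : w ≠ r) : D r + D w ≤ ∑ v : V5, D v := by
  rw [← Finset.add_sum_erase _ D (Finset.mem_univ r)]
  have : D w ≤ ∑ x ∈ Finset.univ.erase r, D x :=
    Finset.single_le_sum (fun x _ => Nat.zero_le _)
      (Finset.mem_erase.mpr ⟨hne, Finset.mem_univ w⟩)
  omega

lemma us_to_solv1 {D C : V5 → ℕ} {r : V5} (hD : (∑ v : V5, D v) = 1) (hr : 1 ≤ D r)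
    (hus : UnitSolvable G5 C r) : Solvable G5 C D := by
  obtain ⟨C', hre, hv⟩ := hus
  refine ⟨C', hre, fun v => ?_⟩
  by_cases hveq : v = r
  · subst hveq
    have h2 : D v ≤ ∑ w : V5, D w := Finset.single_le_sum (fun x _ => Nat.zero_le _)
      (Finset.mem_univ v)
    omega
  · have h3 := pair_le (D := D) hveq
    omega

lemma sum_upd_sub (C : V5 → ℕ) (r : V5) (h : 1 ≤ C r) :
    (∑ v : V5, Function.update C r (C r - 1) v) + 1 = ∑ v : V5, C v := by
  rw [sum_update]
  have h2 : (∑ v : V5, C v) = C r + ∑ w ∈ Finset.univ.erase r, C w :=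
    (Finset.add_sum_erase _ C (Finset.mem_univ r)).symm
  omega

lemma lift_solv {C' C'' D D' : V5 → ℕ} {r : V5} (hC'r : 1 ≤ C' r)
    (hC'' : C'' = Function.update C' r (C' r - 1))
    (hDr : 1 ≤ D r) (hD' : D' = Function.update D r (D r - 1))
    (hsolv : Solvable G5 C'' D') : Solvable G5 C' D := by
  obtain ⟨Cs, hsteps, hviol⟩ := hsolv
  refine ⟨fun v => Cs v + stack r 1 v, ?_, ?_⟩
  · have heq : C' = fun v => C'' v + stack r 1 v := by
      funext v
      by_cases hv : v = r
      · subst hv; rw [hC'', Function.update_self]; simp [stack]; omega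
      · rw [hC'', Function.update_of_ne hv]; simp [stack, hv]
    rw [heq]
    exact reach_add _ hsteps
  · intro v
    have hvi := hviol v
    by_cases hv : v = r
    · subst hv
      rw [hD', Function.update_self] at hvi
      simp [stack]
      omega
    · rw [hD', Function.update_of_ne hv] at hvi
      simp [stack, hv]
      omega

lemma master : ∀ t : ℕ, ∀ D C : V5 → ℕ, 1 ≤ t → (∑ v : V5, D v) = t →
    (if t = 1 then 10 else 4*t+5) ≤ ∑ v : V5, C v → Solvable G5 C D := by
  intro t
  induction t using Nat.strong_induction_on with
  | _ t IH =>
  intro D C ht hD hC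
  obtain ⟨r, hr⟩ := exists_pos (D := D) (by omega)
  by_cases ht1 : t = 1
  · rw [if_pos ht1] at hC
    exact us_to_solv1 (by omega) hr (L10_all C r hC)
  rw [if_neg ht1] at hC
  have ht2 : 2 ≤ t := by omega
  have hD'sum : (∑ v : V5, Function.update D r (D r - 1) v) = t - 1 := by
    have := sum_upd_sub D r hr
    omega
  by_cases hcr : 1 ≤ C r
  · -- peel a pebble already on r
    have hC''sum := sum_upd_sub C r hcr
    have hsolv : Solvable G5 (Function.update C r (C r - 1)) (Function.update D r (D r - 1)) := by
      apply IH (t-1) (by omega) _ _ (by omega) hD'sum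
      by_cases h : t - 1 = 1
      · rw [if_pos h]; omega
      · rw [if_neg h]; omega
    have := lift_solv hcr rfl hr rfl hsolv
    exact this
  · have hc0 : C r = 0 := by omega
    obtain ⟨C', hreach, hC'r, hC'sum, w, hwr, hw2⟩ := deliver_all C r (by omega) hc0
    have hC''sum := sum_upd_sub C' r hC'r
    have hsolv : Solvable G5 (Function.update C' r (C' r - 1)) (Function.update D r (D r - 1)) := by
      by_cases ht2' : t = 2
      · obtain ⟨r2, hr2⟩ := exists_pos (D := Function.update D r (D r - 1)) (by omega)
        refine us_to_solv1 (by omega) hr2 (core9_all _ r2 (by omega) ?_)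
        exact ⟨w, by rw [Function.update_of_ne hwr]; exact hw2⟩
      · apply IH (t-1) (by omega) _ _ (by omega) hD'sum
        rw [if_neg (by omega : ¬ t - 1 = 1)]
        omega
    have hlift := lift_solv hC'r rfl hr rfl hsolv
    obtain ⟨Cs, hsteps, hviol⟩ := hlift
    exact ⟨Cs, Relation.ReflTransGen.trans hreach hsteps, hviol⟩

end PB

theorem petersen_target (D : {s : Finset (Fin 5) // s.card = 2} → ℕ)
    (t : ℕ) (ht : 1 ≤ t) (hD : ∑ v, D v = t) :
    pebblingNumber (kneserGraph 5 2) D ≤ max (10 + 2 * t - 2) (4 * t + 5) ∧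
    ∀ C : {s : Finset (Fin 5) // s.card = 2} → ℕ,
      (∑ v, C v) = max (10 + 2 * t - 2) (4 * t + 5) → Solvable (kneserGraph 5 2) C D := by
  have hsolve : ∀ C : {s : Finset (Fin 5) // s.card = 2} → ℕ,
      (∑ v, C v) = max (10 + 2 * t - 2) (4 * t + 5) → Solvable (kneserGraph 5 2) C D := by
    intro C hC
    apply PB.master t D C ht
    · exact hD
    · have hC' : (∑ v : PB.V5, C v) = max (10 + 2 * t - 2) (4 * t + 5) := hC
      rw [hC']
      split <;> omega
  refine ⟨?_, hsolve⟩
  apply Nat.sInf_le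
  intro C hC
  exact hsolve C hC
end

section
/- Let G = K(m, 2) for some m ≥ 6 and let r be any vertex. Then for every pair of (not necessarily distinct) vertices u, v at distance 2 from r, there exists a vertex w adjacent to r such that w is adjacent to both u and v. -/
lemma not_disjoint_of_dist_two (m : ℕ) (r u : {s : Finset (Fin m) // s.card = 2})
    (hu : (kneserGraph m 2).dist r u = 2) : ¬ Disjoint r.1 u.1 := by
  have hne : r ≠ u := by
    intro h; subst h; simp [SimpleGraph.dist_self] at hu
  have hnadj : ¬ (kneserGraph m 2).Adj r u := by
    intro h
    rw [← SimpleGraph.dist_eq_one_iff_adj] at h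
    omega
  intro hd
  exact hnadj ⟨hne, Or.inl hd⟩


theorem kneser_common_neighbor (m : ℕ) (hm : 6 ≤ m)
    (r u v : {s : Finset (Fin m) // s.card = 2})
    (hu : (kneserGraph m 2).dist r u = 2) (hv : (kneserGraph m 2).dist r v = 2) :
    ∃ w : {s : Finset (Fin m) // s.card = 2},
      (kneserGraph m 2).Adj r w ∧ (kneserGraph m 2).Adj w u ∧ (kneserGraph m 2).Adj w v := by
  have hru := not_disjoint_of_dist_two m r u hu
  have hrv := not_disjoint_of_dist_two m r v hv
  -- card bounds
  have h1 : 1 ≤ (r.1 ∩ u.1).card := Finset.card_pos.2 (Finset.not_disjoint_iff_nonempty_inter.1 hru)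
  have h2 : 1 ≤ (r.1 ∩ v.1).card := Finset.card_pos.2 (Finset.not_disjoint_iff_nonempty_inter.1 hrv)
  have hcu : (r.1 ∪ u.1).card ≤ 3 := by
    have := Finset.card_union_add_card_inter r.1 u.1
    have hr2 := r.2; have hu2 := u.2
    omega
  have hcv : (r.1 ∪ v.1).card ≤ 3 := by
    have := Finset.card_union_add_card_inter r.1 v.1
    have hr2 := r.2; have hv2 := v.2
    omega
  set S : Finset (Fin m) := (r.1 ∪ u.1) ∪ (r.1 ∪ v.1) with hS
  have hcS : S.card ≤ 4 := by
    have h3 := Finset.card_union_add_card_inter (r.1 ∪ u.1) (r.1 ∪ v.1)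
    rw [← hS] at h3
    have h4 : r.1 ⊆ (r.1 ∪ u.1) ∩ (r.1 ∪ v.1) := by
      intro x hx; simp [Finset.mem_inter, Finset.mem_union, hx]
    have h5 := Finset.card_le_card h4
    have hr2 := r.2
    omega
  have hcompl : 2 ≤ Sᶜ.card := by
    have := Finset.card_compl S
    simp only [Fintype.card_fin] at this
    omega
  obtain ⟨t, hts, htc⟩ := Finset.exists_subset_card_eq hcompl
  have hdisj : ∀ x : Finset (Fin m), x ⊆ S → Disjoint x t := by
    intro x hx
    refine Finset.disjoint_left.2 fun a ha hat => ?_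
    have := hts hat
    simp only [Finset.mem_compl] at this
    exact this (hx ha)
  have hdr : Disjoint r.1 t := hdisj _ (by intro x hx; simp [hS, Finset.mem_union, hx])
  have hdu : Disjoint u.1 t := hdisj _ (by intro x hx; simp [hS, Finset.mem_union, hx])
  have hdv : Disjoint v.1 t := hdisj _ (by intro x hx; simp [hS, Finset.mem_union, hx])
  refine ⟨⟨t, htc⟩, ?_, ?_, ?_⟩
  · refine ⟨?_, Or.inl hdr⟩
    intro h
    have : r.1 = t := congrArg Subtype.val h
    rw [this] at hdr
    simp [disjoint_self] at hdr
    simp [hdr] at htc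
  · refine ⟨?_, Or.inr hdu⟩
    intro h
    have : t = u.1 := congrArg Subtype.val h
    rw [← this] at hdu
    simp [disjoint_self] at hdu
    simp [hdu] at htc
  · refine ⟨?_, Or.inr hdv⟩
    intro h
    have : t = v.1 := congrArg Subtype.val h
    rw [← this] at hdv
    simp [disjoint_self] at hdv
    simp [hdv] at htc
end
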